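/- arXiv:2202.10070 — 2 statements merged into one kernel-verified Lean document; each statement's English description precedes it below -/
import Mathlib

section
/- Let θ(t) = 1/(t^4 (T-t)^4) for t ∈ (0,T). Then |θ''(t)| ≤ 80 (T/2)^6 θ(t)^2 for all t ∈ (0,T). -/
open Set Filter Topology

/-!
Write `θ = g⁻⁴` with `g t = t (T - t)`, so that `g' = T - 2t`, `g'' = -2` and
`θ'' = (20 g'² + 8 g) / g⁶`. Since `g'² = T² - 4g` and `0 < g ≤ (T/2)²`, the numerator times `g²`
is at most `20 T² · (T/2)⁴ = 80 (T/2)⁶`.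
-/

theorem hasDerivAt_deriv_zpow_comp {𝕜 : Type*} [NontriviallyNormedField 𝕜] {g g' : 𝕜 → 𝕜}
    {g'' x : 𝕜} {U : Set 𝕜} (n : ℤ) (hU : U ∈ 𝓝 x) (hg : ∀ y ∈ U, HasDerivAt g (g' y) y)
    (hg0 : ∀ y ∈ U, g y ≠ 0) (hg' : HasDerivAt g' g'' x) :
    HasDerivAt (deriv fun s => g s ^ n)
      (n * ((n - 1) * g x ^ (n - 2) * g' x ^ 2 + g x ^ (n - 1) * g'')) x := by
  have hderiv : deriv (fun s => g s ^ n) =ᶠ[𝓝 x] fun y => n * g y ^ (n - 1) * g' y := by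
    filter_upwards [hU] with y hy
    exact ((hasDerivAt_zpow n (g y) (.inl (hg0 y hy))).comp y (hg y hy)).deriv
  have hx := mem_of_mem_nhds hU
  refine ((((hasDerivAt_zpow (n - 1) (g x) (.inl (hg0 x hx))).comp x (hg x hx)).const_mul
    (n : 𝕜)).mul hg').congr_of_eventuallyEq hderiv |>.congr_deriv ?_
  rw [Function.comp_apply, sub_sub, one_add_one_eq_two, Int.cast_sub, Int.cast_one]
  ring

theorem hasDerivAt_mul_const_sub (T x : ℝ) : HasDerivAt (fun s => s * (T - s)) (T - 2 * x) x :=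
  ((hasDerivAt_id' x).mul ((hasDerivAt_id' x).const_sub T)).congr_deriv (by ring)

theorem deriv_deriv_mul_const_sub_zpow_neg_four {T t : ℝ} (ht : t ∈ Ioo 0 T) :
    deriv (deriv fun s => (s * (T - s)) ^ (-4 : ℤ)) t =
      (20 * (T - 2 * t) ^ 2 + 8 * (t * (T - t))) / (t * (T - t)) ^ 6 := by
  have hg'' : HasDerivAt (fun s => T - 2 * s) (-2) t := by
    simpa using ((hasDerivAt_id t).const_mul 2).const_sub T
  rw [(hasDerivAt_deriv_zpow_comp (-4) (isOpen_Ioo.mem_nhds ht)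
    (fun y _ => hasDerivAt_mul_const_sub T y) (fun y hy => (mul_pos hy.1 (sub_pos.2 hy.2)).ne')
    hg'').deriv]
  have : t * (T - t) ≠ 0 := (mul_pos ht.1 (sub_pos.2 ht.2)).ne'
  norm_num only [Int.reduceSub, Int.cast_neg, Int.cast_ofNat]
  field_simp
  ring

theorem sq_sub_add_mul_mul_sq_le {a b : ℝ} (ha : 0 ≤ a) (hb : 0 ≤ b) :
    (20 * (a - b) ^ 2 + 8 * (a * b)) * (a * b) ^ 2 ≤ 80 * ((a + b) / 2) ^ 6 := by
  have hab : a * b ≤ ((a + b) / 2) ^ 2 := by nlinarith [four_mul_le_sq_add a b]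
  calc (20 * (a - b) ^ 2 + 8 * (a * b)) * (a * b) ^ 2
      ≤ 80 * ((a + b) / 2) ^ 2 * (((a + b) / 2) ^ 2) ^ 2 := by
        gcongr
        nlinarith [mul_nonneg ha hb]
    _ = 80 * ((a + b) / 2) ^ 6 := by ring

theorem theta_second_deriv_bound'_general (T : ℝ)
    (θ : ℝ → ℝ) (hθ : ∀ t ∈ Ioo 0 T, θ t = 1 / (t ^ 4 * (T - t) ^ 4)) :
    ∀ t ∈ Ioo 0 T, |deriv (deriv θ) t| ≤ 80 * (T / 2) ^ 6 * (θ t) ^ 2 := by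
  intro t ht
  have hθ_eq : θ =ᶠ[𝓝 t] fun s => (s * (T - s)) ^ (-4 : ℤ) := by
    filter_upwards [isOpen_Ioo.mem_nhds ht] with s hs
    rw [hθ s hs, zpow_neg, zpow_ofNat, mul_pow, one_div]
  have hg : 0 < t * (T - t) := mul_pos ht.1 (sub_pos.2 ht.2)
  rw [hθ_eq.deriv.deriv_eq, deriv_deriv_mul_const_sub_zpow_neg_four ht, hθ t ht,
    abs_of_nonneg (by positivity), div_le_iff₀ (by positivity)]
  have key := sq_sub_add_mul_mul_sq_le ht.1.le (sub_pos.2 ht.2).le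
  rw [add_sub_cancel, show (t - (T - t)) ^ 2 = (T - 2 * t) ^ 2 by ring,
    ← le_div_iff₀ (by positivity)] at key
  calc _ ≤ 80 * (T / 2) ^ 6 / (t * (T - t)) ^ 2 := key
    _ = _ := by field_simp

theorem theta_second_deriv_bound' (T : ℝ) (hT : 0 < T)
    (θ : ℝ → ℝ) (hθ : ∀ t ∈ Ioo 0 T, θ t = 1 / (t ^ 4 * (T - t) ^ 4)) :
    ∀ t ∈ Ioo 0 T, |deriv (deriv θ) t| ≤ 80 * (T / 2) ^ 6 * (θ t) ^ 2 :=
  theta_second_deriv_bound'_general T θ hθ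
end

section
/- Suppose X, Y, Z are Hilbert spaces with Y separable, F : X → Z and G : Y → Z bounded linear operators, and there is C > 0 such that ‖F* z‖ ≤ C ‖G* z‖ for all z ∈ Z. Then for every x ∈ X there exists y ∈ Y with F x = G y; i.e., range F ⊆ range G. -/
open ContinuousLinearMap

/-!
For fixed `x`, the functional `z ↦ ⟪F x, z⟫ = ⟪x, F* z⟫` is bounded by `C ‖x‖ ‖G* z‖`, so it
factors through `G*` as a bounded functional on `range G*`. Extending it to `Y` by Hahn–Banach and
representing it by Riesz as `⟪y, ·⟫` gives `⟪F x, z⟫ = ⟪y, G* z⟫ = ⟪G y, z⟫` for all `z`.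
-/

theorem LinearMap.exists_comp_rangeRestrict_eq {R M N P : Type*} [Ring R]
    [AddCommGroup M] [Module R M] [AddCommGroup N] [Module R N] [AddCommGroup P] [Module R P]
    (f : M →ₗ[R] N) (g : M →ₗ[R] P) (h : LinearMap.ker f ≤ LinearMap.ker g) :
    ∃ g' : LinearMap.range f →ₗ[R] P, g' ∘ₗ f.rangeRestrict = g :=
  ⟨(LinearMap.ker f).liftQ g h ∘ₗ f.quotKerEquivRange.symm.toLinearMap, by
    ext x
    have hx : f.quotKerEquivRange.symm (f.rangeRestrict x) = (LinearMap.ker f).mkQ x :=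
      f.quotKerEquivRange.symm_apply_eq.mpr (Subtype.ext (f.quotKerEquivRange_apply_mk x).symm)
    simp [hx]⟩

theorem StrongDual.exists_comp_eq_of_norm_le {𝕜 Y Z : Type*} [RCLike 𝕜]
    [NormedAddCommGroup Y] [NormedSpace 𝕜 Y] [AddCommGroup Z] [Module 𝕜 Z]
    (T : Z →ₗ[𝕜] Y) (φ : Z →ₗ[𝕜] 𝕜) (K : ℝ) (hφ : ∀ z, ‖φ z‖ ≤ K * ‖T z‖) :
    ∃ ℓ : StrongDual 𝕜 Y, ∀ z, ℓ (T z) = φ z := by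
  have hker : LinearMap.ker T ≤ LinearMap.ker φ := fun z hz ↦ by
    simpa [LinearMap.mem_ker.mp hz] using hφ z
  obtain ⟨ψ, hψ⟩ := T.exists_comp_rangeRestrict_eq φ hker
  have hψ_bound : ∀ u, ‖ψ u‖ ≤ K * ‖u‖ := by
    rintro ⟨_, z, rfl⟩
    have hz := hφ z
    rw [← hψ] at hz
    exact hz
  obtain ⟨ℓ, hℓ, -⟩ := exists_extension_norm_eq _ (ψ.mkContinuous K hψ_bound)
  exact ⟨ℓ, fun z ↦ by simpa [← hψ] using hℓ (T.rangeRestrict z)⟩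

theorem InnerProductSpace.exists_inner_comp_eq_of_norm_le {𝕜 Y Z : Type*} [RCLike 𝕜]
    [NormedAddCommGroup Y] [InnerProductSpace 𝕜 Y] [CompleteSpace Y] [AddCommGroup Z] [Module 𝕜 Z]
    (T : Z →ₗ[𝕜] Y) (φ : Z →ₗ[𝕜] 𝕜) (K : ℝ) (hφ : ∀ z, ‖φ z‖ ≤ K * ‖T z‖) :
    ∃ y : Y, ∀ z, φ z = inner 𝕜 y (T z) := by
  obtain ⟨ℓ, hℓ⟩ := StrongDual.exists_comp_eq_of_norm_le T φ K hφ
  exact ⟨(toDual 𝕜 Y).symm ℓ, fun z ↦ by rw [toDual_symm_apply, hℓ]⟩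

theorem range_inclusion_general
    {X Y Z : Type*}
    [NormedAddCommGroup X] [InnerProductSpace ℝ X] [CompleteSpace X]
    [NormedAddCommGroup Y] [InnerProductSpace ℝ Y] [CompleteSpace Y]
    [NormedAddCommGroup Z] [InnerProductSpace ℝ Z] [CompleteSpace Z]
    (F : X →L[ℝ] Z) (G : Y →L[ℝ] Z) (C : ℝ)
    (h : ∀ z : Z, ‖ContinuousLinearMap.adjoint F z‖ ≤ C * ‖ContinuousLinearMap.adjoint G z‖) :
    ∀ x : X, ∃ y : Y, F x = G y := by
  intro x
  have hbound : ∀ z, ‖innerSL ℝ (F x) z‖ ≤ (‖x‖ * C) * ‖adjoint G z‖ := fun z ↦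
    calc ‖innerSL ℝ (F x) z‖ = ‖inner ℝ x (adjoint F z)‖ := by
          rw [innerSL_apply_apply, adjoint_inner_right]
      _ ≤ ‖x‖ * ‖adjoint F z‖ := norm_inner_le_norm _ _
      _ ≤ (‖x‖ * C) * ‖adjoint G z‖ := by
          rw [mul_assoc]; exact mul_le_mul_of_nonneg_left (h z) (norm_nonneg x)
  obtain ⟨y, hy⟩ := InnerProductSpace.exists_inner_comp_eq_of_norm_le
    (adjoint G).toLinearMap (innerSL ℝ (F x)).toLinearMap _ hbound
  refine ⟨y, ext_inner_right ℝ fun z ↦ ?_⟩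
  simpa [adjoint_inner_right] using hy z

theorem range_inclusion
    {X Y Z : Type*}
    [NormedAddCommGroup X] [InnerProductSpace ℝ X] [CompleteSpace X]
    [NormedAddCommGroup Y] [InnerProductSpace ℝ Y] [CompleteSpace Y]
    [NormedAddCommGroup Z] [InnerProductSpace ℝ Z] [CompleteSpace Z]
    [TopologicalSpace.SeparableSpace Y]
    (F : X →L[ℝ] Z) (G : Y →L[ℝ] Z) (C : ℝ) (hC : 0 < C)
    (h : ∀ z : Z, ‖ContinuousLinearMap.adjoint F z‖ ≤ C * ‖ContinuousLinearMap.adjoint G z‖) :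
    ∀ x : X, ∃ y : Y, F x = G y :=
  range_inclusion_general F G C h
end
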